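/- Every pure shifted ordered complex is order-decomposable. -/

import Mathlib

namespace OrderedComplexes

variable {α : Type*} [DecidableEq α]

/-- A (downward closed) simplicial complex, as a finite set of faces. -/
def IsComplex (S : Finset (Finset α)) : Prop := ∀ σ ∈ S, ∀ τ ⊆ σ, τ ∈ S

/-- `σ` is a facet (maximal face) of the complex `S`. -/
def IsFacet (S : Finset (Finset α)) (σ : Finset α) : Prop :=
  σ ∈ S ∧ ∀ τ ∈ S, σ ⊆ τ → σ = τ

/-- A complex is pure if all of its facets have the same cardinality. -/
def IsPure (S : Finset (Finset α)) : Prop :=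
  ∀ σ τ, IsFacet S σ → IsFacet S τ → σ.card = τ.card

/-- The restriction `Σ|T = {σ ∈ Σ : σ ⊆ T}`. -/
def restrictC (S : Finset (Finset α)) (T : Finset α) : Finset (Finset α) :=
  S.filter (· ⊆ T)

/-- The link of `τ` in `Σ`: `{ρ ∈ Σ : ρ ∩ τ = ∅ and ρ ∪ τ ∈ Σ}`. -/
def linkC (S : Finset (Finset α)) (τ : Finset α) : Finset (Finset α) :=
  S.filter fun ρ => Disjoint ρ τ ∧ ρ ∪ τ ∈ S

/-- The lexicographically smallest (with respect to the linear order `w`, encoded as a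
duplicate-free list) facet of the complex `S`, computed greedily along `w`. -/
def lexMinFacet (w : List α) (S : Finset (Finset α)) : Finset α :=
  w.foldl (fun τ a => if insert a τ ∈ S then insert a τ else τ) ∅

/-- The contraction `Σ/A`: the link in `Σ` of the lexicographically smallest facet of the
restriction `Σ|A`. -/
def contractC (w : List α) (S : Finset (Finset α)) (A : Finset α) : Finset (Finset α) :=
  linkC S (lexMinFacet w (restrictC S A))

/-- An ordered complex: a linear order `w` on a finite ground set (a duplicate-free list)
together with a simplicial complex whose faces are subsets of the ground set. -/
def IsOrderedComplex (w : List α) (S : Finset (Finset α)) : Prop :=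
  w.Nodup ∧ (∀ σ ∈ S, σ ⊆ w.toFinset) ∧ IsComplex S

/-- The join of two complexes: `{σ₁ ∪ σ₂ : σ₁ ∈ Σ₁, σ₂ ∈ Σ₂}`. -/
def joinC (S₁ S₂ : Finset (Finset α)) : Finset (Finset α) :=
  (S₁ ×ˢ S₂).image fun p => p.1 ∪ p.2

/-- `w` is a shuffle of the linear orders `w₁` and `w₂`: a linear order on the union of the
two ground sets restricting to `wᵢ` on each. -/
def IsShuffle (w₁ w₂ w : List α) : Prop :=
  w.Nodup ∧ w.toFinset = w₁.toFinset ∪ w₂.toFinset ∧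
    w.filter (fun a => decide (a ∈ w₁.toFinset)) = w₁ ∧
    w.filter (fun a => decide (a ∈ w₂.toFinset)) = w₂

/-- A Hopf class: a class of pure ordered complexes closed under shuffled joins, and under
restriction and contraction by initial segments (with all such restrictions pure).
Here the initial segment of `w` of length `k` is `(w.take k).toFinset`, the order induced on
it is `w.take k`, and the order induced on its complement is `w.drop k`. -/
def IsHopfClass (Q : Set (List α × Finset (Finset α))) : Prop :=
  (∀ p ∈ Q, IsOrderedComplex p.1 p.2 ∧ IsPure p.2) ∧
  (∀ p₁ ∈ Q, ∀ p₂ ∈ Q, Disjoint p₁.1.toFinset p₂.1.toFinset →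
    ∀ w, IsShuffle p₁.1 p₂.1 w → (w, joinC p₁.2 p₂.2) ∈ Q) ∧
  (∀ p ∈ Q, ∀ k : ℕ,
    IsPure (restrictC p.2 (p.1.take k).toFinset) ∧
    (p.1.take k, restrictC p.2 (p.1.take k).toFinset) ∈ Q) ∧
  (∀ p ∈ Q, ∀ k : ℕ,
    (p.1.drop k, contractC p.1 p.2 (p.1.take k).toFinset) ∈ Q)

/-- Order-decomposability: either `Σ` has exactly one facet, or `Σ` is pure and for every
nonempty proper initial segment `A` of `w` both `Σ|A` and `Σ/A` are pure and (with their
induced orders) order-decomposable. -/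
inductive OrderDecomposable : List α → Finset (Finset α) → Prop
  | unique (w : List α) (S : Finset (Finset α)) (σ : Finset α)
      (hσ : IsFacet S σ) (huniq : ∀ τ, IsFacet S τ → τ = σ) :
      OrderDecomposable w S
  | pure (w : List α) (S : Finset (Finset α)) (hpure : IsPure S)
      (hres_pure : ∀ k : ℕ, 0 < k → k < w.length →
        IsPure (restrictC S (w.take k).toFinset))
      (hcon_pure : ∀ k : ℕ, 0 < k → k < w.length →
        IsPure (contractC w S (w.take k).toFinset))
      (hres : ∀ k : ℕ, 0 < k → k < w.length →
        OrderDecomposable (w.take k) (restrictC S (w.take k).toFinset))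
      (hcon : ∀ k : ℕ, 0 < k → k < w.length →
        OrderDecomposable (w.drop k) (contractC w S (w.take k).toFinset)) :
      OrderDecomposable w S


/-- An ordered complex `(w, Σ)` is shifted if replacing any vertex of a face by a smaller
vertex (with respect to `w`) yields another face. -/
def IsShifted (w : List α) (S : Finset (Finset α)) : Prop :=
  ∀ σ ∈ S, ∀ e ∈ σ, ∀ f ∈ w.toFinset, f ∉ σ →
    w.idxOf f < w.idxOf e → insert f (σ.erase e) ∈ S

/-!
Restricting to an initial segment `A` of `w` and contracting by `A` both preserve shiftedness,
because the orders induced on `A` and on its complement are restrictions of `w`; by induction on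
the length of `w` it therefore suffices that both operations preserve purity.

For the restriction, a facet `σ` of `Σ|A` extends to a facet `τ` of `Σ` with `τ ∩ A = σ`. If `σ`
were smaller than another facet `ρ` of `Σ|A`, then by purity `τ` has a vertex `e ∉ A`, while `ρ`
has a vertex `f ∈ A ∖ σ`; shifting `e` to the earlier vertex `f` in `τ` gives a face containing
`σ ∪ {f} ⊆ A`, against the maximality of `σ`.

For the contraction, `ρ ↦ ρ ∪ τ` sends facets of `link_Σ(τ)` to facets of `Σ`, so every link in a
pure complex is pure. The greedy facet `τ` of `Σ|A` cannot be enlarged inside `A`, which forces the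
faces of its link to lie outside `A`.
-/

@[simp]
lemma mem_restrictC {S : Finset (Finset α)} {T σ : Finset α} :
    σ ∈ restrictC S T ↔ σ ∈ S ∧ σ ⊆ T :=
  Finset.mem_filter

@[simp]
lemma mem_linkC {S : Finset (Finset α)} {τ ρ : Finset α} :
    ρ ∈ linkC S τ ↔ ρ ∈ S ∧ Disjoint ρ τ ∧ ρ ∪ τ ∈ S :=
  Finset.mem_filter

omit [DecidableEq α] in
lemma exists_isFacet_superset {S : Finset (Finset α)} {σ : Finset α} (hσ : σ ∈ S) :
    ∃ τ, σ ⊆ τ ∧ IsFacet S τ := by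
  obtain ⟨τ, hστ, hτ⟩ := S.exists_le_maximal hσ
  exact ⟨τ, hστ, hτ.1, fun ρ hρ hτρ => Finset.Subset.antisymm hτρ (hτ.2 hρ hτρ)⟩

omit [DecidableEq α] in
lemma isPure_of_forall_card_le {S : Finset (Finset α)}
    (h : ∀ σ ρ, IsFacet S σ → IsFacet S ρ → ρ.card ≤ σ.card) : IsPure S :=
  fun σ τ hσ hτ => le_antisymm (h τ σ hτ hσ) (h σ τ hσ hτ)

section IdxOf

variable {w : List α} {k : ℕ} {a b : α}

lemma idxOf_take_of_mem (h : a ∈ w.take k) : (w.take k).idxOf a = w.idxOf a := by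
  conv_rhs => rw [← List.take_append_drop k w]
  exact (List.idxOf_append_of_mem h).symm

lemma idxOf_eq_length_take_add (h : a ∉ w.take k) :
    w.idxOf a = (w.take k).length + (w.drop k).idxOf a := by
  conv_lhs => rw [← List.take_append_drop k w]
  exact List.idxOf_append_of_notMem h

lemma idxOf_lt_idxOf_of_mem_take (ha : a ∈ w.take k) (hb : b ∉ w.take k) :
    w.idxOf a < w.idxOf b := by
  rw [← idxOf_take_of_mem ha, idxOf_eq_length_take_add hb]
  exact (List.idxOf_lt_length_iff.2 ha).trans_le (Nat.le_add_right _ _)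

omit [DecidableEq α] in
lemma not_mem_take_of_mem_drop (hw : w.Nodup) (h : a ∈ w.drop k) : a ∉ w.take k :=
  fun h' => List.disjoint_take_drop hw le_rfl h' h

lemma idxOf_lt_idxOf_iff_of_mem_drop (hw : w.Nodup) (ha : a ∈ w.drop k) (hb : b ∈ w.drop k) :
    w.idxOf a < w.idxOf b ↔ (w.drop k).idxOf a < (w.drop k).idxOf b := by
  rw [idxOf_eq_length_take_add (not_mem_take_of_mem_drop hw ha),
    idxOf_eq_length_take_add (not_mem_take_of_mem_drop hw hb)]
  omega

end IdxOf

section Restriction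

variable {w : List α} {S : Finset (Finset α)}

lemma isComplex_restrictC (hS : IsComplex S) (T : Finset α) : IsComplex (restrictC S T) := by
  intro σ hσ τ hτσ
  rw [mem_restrictC] at hσ ⊢
  exact ⟨hS σ hσ.1 τ hτσ, hτσ.trans hσ.2⟩

lemma exists_isFacet_inter_eq_of_isFacet_restrictC (hS : IsComplex S) {T σ : Finset α}
    (hσ : IsFacet (restrictC S T) σ) : ∃ τ, IsFacet S τ ∧ τ ∩ T = σ := by
  obtain ⟨hσS, hσT⟩ := mem_restrictC.1 hσ.1
  obtain ⟨τ, hστ, hτ⟩ := exists_isFacet_superset hσS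
  refine ⟨τ, hτ, Finset.Subset.antisymm (fun x hx => ?_) (Finset.subset_inter hστ hσT)⟩
  rw [Finset.mem_inter] at hx
  have hins : insert x σ ∈ restrictC S T := mem_restrictC.2
    ⟨hS τ hτ.1 _ (Finset.insert_subset hx.1 hστ), Finset.insert_subset hx.2 hσT⟩
  exact hσ.2 _ hins (Finset.subset_insert x σ) ▸ Finset.mem_insert_self x σ

lemma isOrderedComplex_restrictC_take (hoc : IsOrderedComplex w S) (k : ℕ) :
    IsOrderedComplex (w.take k) (restrictC S (w.take k).toFinset) :=
  ⟨hoc.1.sublist (List.take_sublist k w), fun _ hσ => (mem_restrictC.1 hσ).2,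
    isComplex_restrictC hoc.2.2 _⟩

lemma isShifted_restrictC_take (hsh : IsShifted w S) (k : ℕ) :
    IsShifted (w.take k) (restrictC S (w.take k).toFinset) := by
  intro σ hσ e he f hf hfσ hlt
  rw [mem_restrictC] at hσ ⊢
  rw [List.mem_toFinset] at hf
  rw [idxOf_take_of_mem hf, idxOf_take_of_mem (List.mem_toFinset.1 (hσ.2 he))] at hlt
  have hfw : f ∈ w.toFinset := List.mem_toFinset.2 ((List.take_sublist k w).mem hf)
  exact ⟨hsh σ hσ.1 e he f hfw hfσ hlt,
    Finset.insert_subset (List.mem_toFinset.2 hf) ((Finset.erase_subset e σ).trans hσ.2)⟩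

lemma card_le_of_isFacet_restrictC_take (hS : IsComplex S) (hpure : IsPure S)
    (hsh : IsShifted w S) {k : ℕ} {σ ρ : Finset α}
    (hσ : IsFacet (restrictC S (w.take k).toFinset) σ)
    (hρ : IsFacet (restrictC S (w.take k).toFinset) ρ) : ρ.card ≤ σ.card := by
  set A := (w.take k).toFinset
  by_contra! hlt
  obtain ⟨τ, hτ, hτA⟩ := exists_isFacet_inter_eq_of_isFacet_restrictC hS hσ
  obtain ⟨τ', hτ', hτ'A⟩ := exists_isFacet_inter_eq_of_isFacet_restrictC hS hρ
  have hστ : σ ⊆ τ := hτA ▸ Finset.inter_subset_left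
  have hστ_card : σ.card < τ.card := calc
    σ.card < ρ.card := hlt
    _ ≤ τ'.card := Finset.card_le_card (hτ'A ▸ Finset.inter_subset_left)
    _ = τ.card := hpure _ _ hτ' hτ
  obtain ⟨e, heτ, heσ⟩ := Finset.exists_mem_notMem_of_card_lt_card hστ_card
  obtain ⟨f, hfρ, hfσ⟩ := Finset.exists_mem_notMem_of_card_lt_card hlt
  have heA : e ∉ A := fun h => heσ (hτA ▸ Finset.mem_inter.2 ⟨heτ, h⟩)
  have hfA : f ∈ A := (mem_restrictC.1 hρ.1).2 hfρ
  have hfτ : f ∉ τ := fun h => hfσ (hτA ▸ Finset.mem_inter.2 ⟨h, hfA⟩)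
  have hfw : f ∈ w.toFinset := List.mem_toFinset.2 (List.mem_of_mem_take (List.mem_toFinset.1 hfA))
  have hshifted : insert f (τ.erase e) ∈ S := hsh τ hτ.1 e heτ f hfw hfτ
    (idxOf_lt_idxOf_of_mem_take (List.mem_toFinset.1 hfA) (mt List.mem_toFinset.2 heA))
  have hins : insert f σ ∈ restrictC S A := mem_restrictC.2
    ⟨hS _ hshifted _ (Finset.insert_subset_insert f (Finset.subset_erase.2 ⟨hστ, heσ⟩)),
      Finset.insert_subset hfA (mem_restrictC.1 hσ.1).2⟩
  exact hfσ (hσ.2 _ hins (Finset.subset_insert f σ) ▸ Finset.mem_insert_self f σ)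

lemma isPure_restrictC_take (hS : IsComplex S) (hpure : IsPure S) (hsh : IsShifted w S)
    (k : ℕ) : IsPure (restrictC S (w.take k).toFinset) :=
  isPure_of_forall_card_le fun _ _ hσ hρ =>
    card_le_of_isFacet_restrictC_take hS hpure hsh hσ hρ

end Restriction

section LexMinFacet

variable {R : Finset (Finset α)}

def greedyStep (R : Finset (Finset α)) (τ : Finset α) (a : α) : Finset α :=
  if insert a τ ∈ R then insert a τ else τ

lemma subset_greedyStep (t : Finset α) (a : α) : t ⊆ greedyStep R t a := by
  unfold greedyStep
  split_ifs
  exacts [Finset.subset_insert a t, Finset.Subset.refl t]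

lemma subset_foldl_greedyStep (l : List α) (t : Finset α) : t ⊆ l.foldl (greedyStep R) t := by
  induction l generalizing t with
  | nil => exact Finset.Subset.refl t
  | cons a l ih => exact (subset_greedyStep t a).trans (ih _)

lemma foldl_greedyStep_subset {T : Finset α} (hR : ∀ ρ ∈ R, ρ ⊆ T) (l : List α)
    {t : Finset α} (ht : t ⊆ T) : l.foldl (greedyStep R) t ⊆ T := by
  induction l generalizing t with
  | nil => exact ht
  | cons a l ih =>
    refine ih ?_
    unfold greedyStep
    split_ifs with h
    exacts [hR _ h, ht]

lemma mem_foldl_greedyStep (hR : IsComplex R) {ρ : Finset α} (hρ : ρ ∈ R) (l : List α)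
    (t : Finset α) (hsub : l.foldl (greedyStep R) t ⊆ ρ) {a : α} (ha : a ∈ l) (haρ : a ∈ ρ) :
    a ∈ l.foldl (greedyStep R) t := by
  induction l generalizing t with
  | nil => exact absurd ha List.not_mem_nil
  | cons b l ih =>
    rw [List.foldl_cons] at hsub ⊢
    rcases List.mem_cons.1 ha with rfl | ha
    · have htρ : t ⊆ ρ :=
        (subset_greedyStep t a).trans ((subset_foldl_greedyStep l _).trans hsub)
      have hstep : greedyStep R t a = insert a t :=
        if_pos (hR ρ hρ _ (Finset.insert_subset haρ htρ))
      exact subset_foldl_greedyStep l _ (hstep ▸ Finset.mem_insert_self a t)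
    · exact ih _ hsub ha

lemma lexMinFacet_subset {w : List α} {T : Finset α} (hR : ∀ ρ ∈ R, ρ ⊆ T) :
    lexMinFacet w R ⊆ T :=
  foldl_greedyStep_subset hR w (Finset.empty_subset T)

lemma mem_lexMinFacet_of_insert_mem (hR : IsComplex R) {w : List α} {a : α} (ha : a ∈ w)
    (h : insert a (lexMinFacet w R) ∈ R) : a ∈ lexMinFacet w R :=
  mem_foldl_greedyStep hR h w ∅ (Finset.subset_insert _ _) ha (Finset.mem_insert_self _ _)

end LexMinFacet

section Link

variable {S : Finset (Finset α)} {τ : Finset α}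

lemma isComplex_linkC (hS : IsComplex S) (τ : Finset α) : IsComplex (linkC S τ) := by
  intro ρ hρ ρ' hρ'ρ
  obtain ⟨hρS, hdisj, hunion⟩ := mem_linkC.1 hρ
  exact mem_linkC.2 ⟨hS ρ hρS ρ' hρ'ρ, Finset.disjoint_of_subset_left hρ'ρ hdisj,
    hS _ hunion _ (Finset.union_subset_union hρ'ρ (Finset.Subset.refl τ))⟩

lemma isFacet_union_of_isFacet_linkC (hS : IsComplex S) {ρ : Finset α}
    (hρ : IsFacet (linkC S τ) ρ) : IsFacet S (ρ ∪ τ) := by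
  obtain ⟨-, hdisj, hunion⟩ := mem_linkC.1 hρ.1
  refine ⟨hunion, fun η hη hsub => ?_⟩
  have hτη : τ ⊆ η := Finset.subset_union_right.trans hsub
  have hrest : η \ τ ∈ linkC S τ := mem_linkC.2
    ⟨hS η hη _ Finset.sdiff_subset, Finset.sdiff_disjoint,
      by rwa [Finset.sdiff_union_of_subset hτη]⟩
  have hρ_eq : ρ = η \ τ :=
    hρ.2 _ hrest (Finset.subset_sdiff.2 ⟨Finset.subset_union_left.trans hsub, hdisj⟩)
  rw [hρ_eq, Finset.sdiff_union_of_subset hτη]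

lemma isPure_linkC (hS : IsComplex S) (hpure : IsPure S) (τ : Finset α) :
    IsPure (linkC S τ) := by
  intro ρ ρ' hρ hρ'
  have hcard := hpure _ _ (isFacet_union_of_isFacet_linkC hS hρ)
    (isFacet_union_of_isFacet_linkC hS hρ')
  rw [Finset.card_union_of_disjoint (mem_linkC.1 hρ.1).2.1,
    Finset.card_union_of_disjoint (mem_linkC.1 hρ'.1).2.1] at hcard
  omega

lemma disjoint_of_mem_linkC (hS : IsComplex S) {A : Finset α}
    (hτ : ∀ a ∈ A, insert a τ ∈ S → a ∈ τ) {ρ : Finset α} (hρ : ρ ∈ linkC S τ) :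
    Disjoint ρ A := by
  obtain ⟨-, hdisj, hunion⟩ := mem_linkC.1 hρ
  refine Finset.disjoint_left.2 fun a haρ haA => Finset.disjoint_left.1 hdisj haρ (hτ a haA ?_)
  exact hS _ hunion _ (Finset.insert_subset (Finset.mem_union_left τ haρ)
    Finset.subset_union_right)

lemma isShifted_linkC {w : List α} {k : ℕ} (hw : w.Nodup) (hS : IsComplex S)
    (hsh : IsShifted w S) (hτ : τ ⊆ (w.take k).toFinset)
    (hground : ∀ ρ ∈ linkC S τ, ρ ⊆ (w.drop k).toFinset) :
    IsShifted (w.drop k) (linkC S τ) := by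
  intro σ hσ e he f hf hfσ hlt
  obtain ⟨-, hdisj, hunion⟩ := mem_linkC.1 hσ
  rw [List.mem_toFinset] at hf
  have hfτ : f ∉ τ := fun h => not_mem_take_of_mem_drop hw hf (List.mem_toFinset.1 (hτ h))
  have heτ : e ∉ τ := Finset.disjoint_left.1 hdisj he
  have hfw : f ∈ w.toFinset := List.mem_toFinset.2 ((List.drop_sublist k w).mem hf)
  rw [← idxOf_lt_idxOf_iff_of_mem_drop hw hf (List.mem_toFinset.1 (hground σ hσ he))] at hlt
  have hshifted := hsh _ hunion e (Finset.mem_union_left τ he) f hfw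
    (by simp [hfσ, hfτ]) hlt
  rw [Finset.erase_union_distrib, Finset.erase_eq_of_notMem heτ, ← Finset.insert_union]
    at hshifted
  exact mem_linkC.2 ⟨hS _ hshifted _ Finset.subset_union_left,
    Finset.disjoint_insert_left.2
      ⟨hfτ, Finset.disjoint_of_subset_left (Finset.erase_subset e σ) hdisj⟩,
    hshifted⟩

end Link

section Contraction

variable {w : List α} {S : Finset (Finset α)}

lemma lexMinFacet_restrictC_subset (T : Finset α) :
    lexMinFacet w (restrictC S T) ⊆ T :=
  lexMinFacet_subset fun _ hρ => (mem_restrictC.1 hρ).2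

lemma subset_drop_of_mem_contractC (hoc : IsOrderedComplex w S) (k : ℕ) {ρ : Finset α}
    (hρ : ρ ∈ contractC w S (w.take k).toFinset) : ρ ⊆ (w.drop k).toFinset := by
  obtain ⟨-, hground, hS⟩ := hoc
  have hdisj : Disjoint ρ (w.take k).toFinset := by
    refine disjoint_of_mem_linkC hS (fun a ha hins => ?_) hρ
    refine mem_lexMinFacet_of_insert_mem (isComplex_restrictC hS _)
      (List.mem_of_mem_take (List.mem_toFinset.1 ha)) (mem_restrictC.2 ⟨hins, ?_⟩)
    exact Finset.insert_subset ha (lexMinFacet_restrictC_subset _)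
  intro x hx
  have hxw : x ∈ w := List.mem_toFinset.1 (hground ρ (mem_linkC.1 hρ).1 hx)
  rw [← List.take_append_drop k w, List.mem_append] at hxw
  exact List.mem_toFinset.2 (hxw.resolve_left fun h =>
    Finset.disjoint_left.1 hdisj hx (List.mem_toFinset.2 h))

lemma isOrderedComplex_contractC_take (hoc : IsOrderedComplex w S) (k : ℕ) :
    IsOrderedComplex (w.drop k) (contractC w S (w.take k).toFinset) :=
  ⟨hoc.1.sublist (List.drop_sublist k w), fun _ => subset_drop_of_mem_contractC hoc k,
    isComplex_linkC hoc.2.2 _⟩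

lemma isShifted_contractC_take (hoc : IsOrderedComplex w S) (hsh : IsShifted w S) (k : ℕ) :
    IsShifted (w.drop k) (contractC w S (w.take k).toFinset) :=
  isShifted_linkC hoc.1 hoc.2.2 hsh (lexMinFacet_restrictC_subset _)
    fun _ => subset_drop_of_mem_contractC hoc k

end Contraction

/-- Every pure shifted ordered complex is order-decomposable. -/
theorem orderDecomposable_of_shifted (w : List α) (S : Finset (Finset α))
    (hoc : IsOrderedComplex w S) (hpure : IsPure S) (hshift : IsShifted w S) :
    OrderDecomposable w S := by
  induction hn : w.length using Nat.strong_induction_on generalizing w S with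
  | _ n ih =>
  subst hn
  refine .pure w S hpure (fun k _ _ => isPure_restrictC_take hoc.2.2 hpure hshift k)
    (fun k _ _ => isPure_linkC hoc.2.2 hpure _) (fun k _ hk => ?_) (fun k hk _ => ?_)
  · exact ih _ (by rw [List.length_take]; omega) _ _ (isOrderedComplex_restrictC_take hoc k)
      (isPure_restrictC_take hoc.2.2 hpure hshift k) (isShifted_restrictC_take hshift k) rfl
  · exact ih _ (by rw [List.length_drop]; omega) _ _ (isOrderedComplex_contractC_take hoc k)
      (isPure_linkC hoc.2.2 hpure _) (isShifted_contractC_take hoc hshift k) rfl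

end OrderedComplexes
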